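/- Induction step of steady-state secrecy (Lemma 4, Case 2): if I(S; W) = 0, H(Δ | Q) = 0, I(Q; S, W) = 0, H(S' | S, Q) = 0, and I(Q; W + Δ) = 0, then I(S'; W + Δ) = 0. -/

import Mathlib

/-! Write `T = W + Δ` and `V = (S, Q)`. Since `S'` is a function of `V`, data processing gives
`I(S'; T) ≤ I(V; T)`, so it suffices that `H(V, T) ≥ H(V) + H(T)`. As `Δ` is a function of `Q`,
`W ↦ W + Δ` is a bijection once `Q` is fixed, so `H(V, T) = H(Q, S, W) = H(Q) + H(S) + H(W)`
by `I(Q; S, W) = 0` and `I(S; W) = 0`. On the other side `H(V) ≤ H(S) + H(Q)` and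
`H(T) = H(Q, T) - H(Q) = H(Q, W) - H(Q) ≤ H(W)`, using `I(Q; W + Δ) = 0`. Every inequality is
the nonnegativity of a (conditional) mutual information, i.e. Gibbs' inequality. -/

open scoped BigOperators

/-- `p` is a probability mass function on the finite sample space `Ω`. -/
def IsPMF {Ω : Type} [Fintype Ω] (p : Ω → ℝ) : Prop :=
  (∀ ω, 0 ≤ p ω) ∧ ∑ ω : Ω, p ω = 1

open Classical in
/-- Probability of the event `E` under the pmf `p`. -/
noncomputable def probEvent {Ω : Type} [Fintype Ω] (p : Ω → ℝ) (E : Ω → Prop) : ℝ :=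
  ∑ ω : Ω, if E ω then p ω else 0

/-- Shannon entropy (base `b`) of the random variable `X` under the pmf `p`. -/
noncomputable def entH {Ω α : Type} [Fintype Ω] [Fintype α]
    (b : ℝ) (p : Ω → ℝ) (X : Ω → α) : ℝ :=
  -∑ x : α, probEvent p (fun ω => X ω = x) * Real.logb b (probEvent p (fun ω => X ω = x))

/-- Conditional entropy `H(X | Y) = H(X,Y) - H(Y)`. -/
noncomputable def condH {Ω α β : Type} [Fintype Ω] [Fintype α] [Fintype β]
    (b : ℝ) (p : Ω → ℝ) (X : Ω → α) (Y : Ω → β) : ℝ :=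
  entH b p (fun ω => (X ω, Y ω)) - entH b p Y

/-- Mutual information `I(X;Y) = H(X) + H(Y) - H(X,Y)`. -/
noncomputable def mutI {Ω α β : Type} [Fintype Ω] [Fintype α] [Fintype β]
    (b : ℝ) (p : Ω → ℝ) (X : Ω → α) (Y : Ω → β) : ℝ :=
  entH b p X + entH b p Y - entH b p (fun ω => (X ω, Y ω))

/-- Conditional mutual information `I(X;Y | Z) = H(X|Z) - H(X|Y,Z)`. -/
noncomputable def condMI {Ω α β δ : Type} [Fintype Ω] [Fintype α] [Fintype β] [Fintype δ]
    (b : ℝ) (p : Ω → ℝ) (X : Ω → α) (Y : Ω → β) (Z : Ω → δ) : ℝ :=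
  condH b p X Z - condH b p X (fun ω => (Y ω, Z ω))

/-- `X` and `Y` are independent random variables under `p`. -/
def IndepRV {Ω α β : Type} [Fintype Ω] [Fintype α] [Fintype β]
    (p : Ω → ℝ) (X : Ω → α) (Y : Ω → β) : Prop :=
  ∀ x y, probEvent p (fun ω => X ω = x ∧ Y ω = y)
    = probEvent p (fun ω => X ω = x) * probEvent p (fun ω => Y ω = y)

/-- `X` is uniformly distributed under `p`. -/
def IsUniform {Ω α : Type} [Fintype Ω] [Fintype α] (p : Ω → ℝ) (X : Ω → α) : Prop :=
  ∀ x, probEvent p (fun ω => X ω = x) = ((Fintype.card α : ℝ))⁻¹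

def DeterminedBy {Ω α β : Type} (p : Ω → ℝ) (X : Ω → α) (Y : Ω → β) : Prop :=
  ∀ ω ω', p ω ≠ 0 → p ω' ≠ 0 → Y ω = Y ω' → X ω = X ω'

section
variable {Ω α β γ : Type} [Fintype Ω] [Fintype α] [Fintype β] [Fintype γ] {p : Ω → ℝ} {b : ℝ}

lemma sum_probEvent_mul (X : Ω → α) (φ : α → ℝ) :
    ∑ x, probEvent p (X · = x) * φ x = ∑ ω, p ω * φ (X ω) := by
  classical
  simp only [probEvent, Finset.sum_mul, ite_mul, zero_mul]
  rw [Finset.sum_comm]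
  simp

lemma entH_eq_sum (X : Ω → α) :
    entH b p X = -∑ ω, p ω * Real.logb b (probEvent p (X · = X ω)) := by
  rw [entH, sum_probEvent_mul X (fun x => Real.logb b (probEvent p (X · = x)))]

lemma probEvent_congr_of_support {E F : Ω → Prop} (h : ∀ ω, p ω ≠ 0 → (E ω ↔ F ω)) :
    probEvent p E = probEvent p F := by
  classical
  unfold probEvent
  refine Finset.sum_congr rfl fun ω _ => ?_
  by_cases hω : p ω = 0
  · simp [hω]
  · exact if_congr (h ω hω) rfl rfl

lemma probEvent_nonneg (hp : ∀ ω, 0 ≤ p ω) (E : Ω → Prop) : 0 ≤ probEvent p E :=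
  Finset.sum_nonneg fun ω _ => by split_ifs <;> simp [hp ω]

lemma probEvent_mono (hp : ∀ ω, 0 ≤ p ω) {E F : Ω → Prop} (h : ∀ ω, E ω → F ω) :
    probEvent p E ≤ probEvent p F := by
  unfold probEvent
  refine Finset.sum_le_sum fun ω _ => ?_
  split_ifs with hE hF <;> first | exact le_rfl | exact hp ω | exact absurd (h ω hE) hF

lemma probEvent_lt_probEvent (hp : ∀ ω, 0 ≤ p ω) {E F : Ω → Prop} (h : ∀ ω, E ω → F ω)
    {ω₀ : Ω} (hω₀ : p ω₀ ≠ 0) (hF : F ω₀) (hE : ¬ E ω₀) : probEvent p E < probEvent p F := by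
  unfold probEvent
  refine Finset.sum_lt_sum (fun ω _ => ?_) ⟨ω₀, Finset.mem_univ _, ?_⟩
  · split_ifs with hE hF <;> first | exact le_rfl | exact hp ω | exact absurd (h ω hE) hF
  · simpa [hE, hF] using lt_of_le_of_ne (hp ω₀) (Ne.symm hω₀)

lemma probEvent_pos (hp : ∀ ω, 0 ≤ p ω) {E : Ω → Prop} {ω : Ω} (hω : p ω ≠ 0) (hE : E ω) :
    0 < probEvent p E := by
  classical
  refine (lt_of_le_of_ne (hp ω) (Ne.symm hω)).trans_le ?_
  unfold probEvent
  simpa [hE] using Finset.single_le_sum (f := fun η => if E η then p η else 0)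
    (fun η _ => by split_ifs <;> simp [hp η]) (Finset.mem_univ ω)

lemma sum_probEvent_eq_one (hp : IsPMF p) (X : Ω → α) :
    ∑ x, probEvent p (X · = x) = 1 := by
  simpa [hp.2] using sum_probEvent_mul (p := p) X (fun _ => 1)

lemma sum_probEvent_prod_left {κ : Type} (X : Ω → α) (Z : Ω → κ) (z : κ) :
    ∑ x, probEvent p (fun ω => (X ω, Z ω) = (x, z)) = probEvent p (Z · = z) := by
  classical
  simp only [probEvent]
  rw [Finset.sum_comm]
  refine Finset.sum_congr rfl fun ω _ => ?_
  by_cases hz : Z ω = z <;> simp [hz, Prod.ext_iff]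

lemma sum_mul_logb_nonpos (hb : 1 < b) (hp : IsPMF p) {q : Ω → ℝ}
    (hq : ∀ ω, p ω ≠ 0 → 0 < q ω) (hsum : ∑ ω, p ω * q ω ≤ 1) :
    ∑ ω, p ω * Real.logb b (q ω) ≤ 0 := by
  have hlog : ∑ ω, p ω * Real.log (q ω) ≤ ∑ ω, p ω * q ω - ∑ ω, p ω := by
    rw [← Finset.sum_sub_distrib]
    refine Finset.sum_le_sum fun ω _ => ?_
    by_cases hω : p ω = 0
    · simp [hω]
    · rw [← mul_sub_one]
      exact mul_le_mul_of_nonneg_left (Real.log_le_sub_one_of_pos (hq ω hω)) (hp.1 ω)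
  have : ∑ ω, p ω * Real.logb b (q ω) = (∑ ω, p ω * Real.log (q ω)) / Real.log b := by
    simp only [Real.logb, Finset.sum_div, mul_div_assoc]
  rw [this]
  exact div_nonpos_of_nonpos_of_nonneg (by linarith [hp.2]) (Real.log_pos hb).le

lemma sum_mul_div_probEvent_le (X : Ω → α) {φ : α → ℝ} (hφ : ∀ x, 0 ≤ φ x) :
    ∑ ω, p ω * (φ (X ω) / probEvent p (X · = X ω)) ≤ ∑ x, φ x := by
  rw [← sum_probEvent_mul X (fun x => φ x / probEvent p (X · = x))]
  refine Finset.sum_le_sum fun x _ => ?_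
  rcases eq_or_ne (probEvent p (X · = x)) 0 with h | h
  · simp [h, hφ x]
  · rw [mul_div_cancel₀ _ h]

lemma condMI_eq_neg_sum (hp : ∀ ω, 0 ≤ p ω) (X : Ω → α) (Y : Ω → β) (Z : Ω → γ) :
    condMI b p X Y Z = -∑ ω, p ω * Real.logb b
      (probEvent p (fun ω' => (X ω', Z ω') = (X ω, Z ω))
        * probEvent p (fun ω' => (Y ω', Z ω') = (Y ω, Z ω)) / probEvent p (Z · = Z ω)
        / probEvent p (fun ω' => (X ω', (Y ω', Z ω')) = (X ω, (Y ω, Z ω)))) := by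
  have key : ∀ ω, p ω * Real.logb b
      (probEvent p (fun ω' => (X ω', Z ω') = (X ω, Z ω))
        * probEvent p (fun ω' => (Y ω', Z ω') = (Y ω, Z ω)) / probEvent p (Z · = Z ω)
        / probEvent p (fun ω' => (X ω', (Y ω', Z ω')) = (X ω, (Y ω, Z ω))))
      = p ω * Real.logb b (probEvent p (fun ω' => (X ω', Z ω') = (X ω, Z ω)))
        + p ω * Real.logb b (probEvent p (fun ω' => (Y ω', Z ω') = (Y ω, Z ω)))
        - p ω * Real.logb b (probEvent p (Z · = Z ω))
        - p ω * Real.logb b (probEvent p (fun ω' => (X ω', (Y ω', Z ω')) = (X ω, (Y ω, Z ω)))) := by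
    intro ω
    by_cases hω : p ω = 0
    · simp [hω]
    have pos : ∀ E : Ω → Prop, E ω → probEvent p E ≠ 0 := fun E hE =>
      (probEvent_pos hp hω hE).ne'
    rw [Real.logb_div (div_ne_zero (mul_ne_zero ?_ ?_) ?_) ?_,
      Real.logb_div (mul_ne_zero ?_ ?_) ?_, Real.logb_mul ?_ ?_]
    · ring
    all_goals exact pos _ rfl
  simp only [condMI, condH, entH_eq_sum, key, Finset.sum_add_distrib, Finset.sum_sub_distrib]
  ring

lemma sum_probEvent_mul_probEvent_div_eq_one (hp : IsPMF p) (X : Ω → α) (Y : Ω → β)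
    (Z : Ω → γ) :
    ∑ c : α × β × γ, probEvent p (fun ω => (X ω, Z ω) = (c.1, c.2.2))
      * probEvent p (fun ω => (Y ω, Z ω) = (c.2.1, c.2.2)) / probEvent p (Z · = c.2.2) = 1 := by
  calc _ = ∑ z : γ, (∑ x : α, probEvent p (fun ω => (X ω, Z ω) = (x, z)))
          * (∑ y : β, probEvent p (fun ω => (Y ω, Z ω) = (y, z))) / probEvent p (Z · = z) := by
        simp only [Fintype.sum_prod_type, Finset.sum_mul_sum, Finset.sum_div]
        exact (Finset.sum_congr rfl fun _ _ => Finset.sum_comm).trans Finset.sum_comm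
    _ = ∑ z : γ, probEvent p (Z · = z) := by simp only [sum_probEvent_prod_left, mul_self_div_self]
    _ = 1 := sum_probEvent_eq_one hp Z

lemma condMI_nonneg (hb : 1 < b) (hp : IsPMF p) (X : Ω → α) (Y : Ω → β) (Z : Ω → γ) :
    0 ≤ condMI b p X Y Z := by
  rw [condMI_eq_neg_sum hp.1, neg_nonneg]
  refine sum_mul_logb_nonpos hb hp (fun ω hω => ?_) ?_
  · have pos : ∀ E : Ω → Prop, E ω → 0 < probEvent p E := fun E hE => probEvent_pos hp.1 hω hE
    exact div_pos (div_pos (mul_pos (pos _ rfl) (pos _ rfl)) (pos _ rfl)) (pos _ rfl)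
  · refine (sum_mul_div_probEvent_le (fun ω => (X ω, (Y ω, Z ω))) (fun c => ?_)).trans
      (sum_probEvent_mul_probEvent_div_eq_one hp X Y Z).le
    exact div_nonneg (mul_nonneg (probEvent_nonneg hp.1 _) (probEvent_nonneg hp.1 _))
      (probEvent_nonneg hp.1 _)

lemma entH_eq_of_determinedBy {X : Ω → α} {Y : Ω → β} (hXY : DeterminedBy p X Y)
    (hYX : DeterminedBy p Y X) : entH b p X = entH b p Y := by
  rw [entH_eq_sum, entH_eq_sum]
  congr 1
  refine Finset.sum_congr rfl fun ω _ => ?_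
  by_cases hω : p ω = 0
  · simp [hω]
  · rw [probEvent_congr_of_support fun ω' hω' =>
      ⟨fun h => hYX ω' ω hω' hω h, fun h => hXY ω' ω hω' hω h⟩]

lemma entH_comp_of_injective {e : α → β} (he : Function.Injective e) (X : Ω → α) :
    entH b p (fun ω => e (X ω)) = entH b p X :=
  entH_eq_of_determinedBy (fun _ _ _ _ h => congrArg e h) (fun _ _ _ _ h => he h)

lemma entH_const (hp : IsPMF p) (a : α) : entH b p (fun _ => a) = 0 := by
  simp [entH_eq_sum, probEvent, hp.2]

lemma mutI_eq_condMI_const (hp : IsPMF p) (X : Ω → α) (Y : Ω → β) :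
    mutI b p X Y = condMI b p X Y (fun _ => ()) := by
  have hX := entH_comp_of_injective (b := b) (p := p) (e := fun x => (x, ()))
    (fun _ _ h => congrArg Prod.fst h) X
  have hY := entH_comp_of_injective (b := b) (p := p) (e := fun y => (y, ()))
    (fun _ _ h => congrArg Prod.fst h) Y
  have hXY := entH_comp_of_injective (b := b) (p := p) (e := fun c : α × β => (c.1, (c.2, ())))
    (fun c c' h => by simpa [Prod.ext_iff] using h) (fun ω => (X ω, Y ω))
  simp only [mutI, condMI, condH, hX, hY, hXY, entH_const hp]
  ring

lemma mutI_nonneg (hb : 1 < b) (hp : IsPMF p) (X : Ω → α) (Y : Ω → β) :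
    0 ≤ mutI b p X Y :=
  mutI_eq_condMI_const hp X Y ▸ condMI_nonneg hb hp X Y _

lemma condH_eq_sum (X : Ω → α) (Y : Ω → β) :
    condH b p X Y = ∑ ω, p ω * (Real.logb b (probEvent p (Y · = Y ω))
      - Real.logb b (probEvent p (fun ω' => (X ω', Y ω') = (X ω, Y ω)))) := by
  simp only [condH, entH_eq_sum, mul_sub, Finset.sum_sub_distrib]
  ring

lemma determinedBy_of_condH_eq_zero (hb : 1 < b) (hp : ∀ ω, 0 ≤ p ω) {X : Ω → α} {Y : Ω → β}
    (h : condH b p X Y = 0) : DeterminedBy p X Y := by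
  intro ω ω' hω hω' hY
  by_contra hX
  have hle : ∀ η, probEvent p (fun ω' => (X ω', Y ω') = (X η, Y η)) ≤ probEvent p (Y · = Y η) :=
    fun η => probEvent_mono hp fun _ h => congrArg Prod.snd h
  have hlt : probEvent p (fun η => (X η, Y η) = (X ω, Y ω)) < probEvent p (Y · = Y ω) :=
    probEvent_lt_probEvent hp (fun _ h => congrArg Prod.snd h) hω' hY.symm
      fun h => hX (congrArg Prod.fst h).symm
  refine h.not_gt ?_
  rw [condH_eq_sum]
  refine Finset.sum_pos' (fun ω _ => ?_) ⟨ω, Finset.mem_univ _, ?_⟩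
  · by_cases hω : p ω = 0
    · simp [hω]
    · exact mul_nonneg (hp ω) (sub_nonneg.2 (Real.logb_le_logb_of_le hb
        (probEvent_pos hp hω rfl) (hle ω)))
  · exact mul_pos (lt_of_le_of_ne (hp ω) (Ne.symm hω))
      (sub_pos.2 (Real.logb_lt_logb hb (probEvent_pos hp hω rfl) hlt))

lemma mutI_le_mutI_of_determinedBy (hb : 1 < b) (hp : IsPMF p) {U : Ω → α} {V : Ω → β}
    (hUV : DeterminedBy p U V) (T : Ω → γ) : mutI b p U T ≤ mutI b p V T := by
  have hVU : entH b p (fun ω => (V ω, U ω)) = entH b p V :=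
    entH_eq_of_determinedBy (fun ω ω' hω hω' h => Prod.ext h (hUV ω ω' hω hω' h))
      (fun ω ω' hω hω' h => congrArg Prod.fst h)
  have hVTU : entH b p (fun ω => (V ω, (T ω, U ω))) = entH b p (fun ω => (V ω, T ω)) :=
    entH_eq_of_determinedBy
      (fun ω ω' hω hω' h => by
        obtain ⟨hV, hT⟩ := Prod.mk.inj h
        rw [hV, hT, hUV ω ω' hω hω' hV])
      (fun _ _ _ _ h => by simp_all)
  have hTU := entH_comp_of_injective (b := b) (p := p) Prod.swap_injective
    (fun ω => (U ω, T ω))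
  have := condMI_nonneg hb hp V T U
  simp only [condMI, condH, mutI, Prod.swap_prod_mk] at *
  linarith

lemma entH_prod_add_of_determinedBy {κ G : Type} [Fintype κ] [Fintype G] [Add G]
    [IsRightCancelAdd G] {K : Ω → κ} {W Δ : Ω → G} (hΔ : DeterminedBy p Δ K) :
    entH b p (fun ω => (K ω, W ω + Δ ω)) = entH b p (fun ω => (K ω, W ω)) := by
  refine entH_eq_of_determinedBy (fun ω ω' hω hω' h => ?_) (fun ω ω' hω hω' h => ?_)
  · obtain ⟨hK, hW⟩ := Prod.mk.inj h
    rw [hK, hW, hΔ ω ω' hω hω' hK]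
  · obtain ⟨hK, hT⟩ := Prod.mk.inj h
    rw [hΔ ω ω' hω hω' hK] at hT
    exact Prod.ext hK (add_right_cancel hT)

end

theorem steady_state_secrecy_induction_step_general
    {Ω F β γ δ : Type} [Fintype Ω] [Field F] [Fintype F]
    [Fintype β] [Fintype γ] [Fintype δ]
    {L : ℕ} (b : ℝ) (hb : 1 < b) (p : Ω → ℝ) (hp : IsPMF p)
    (W Δ : Ω → (Fin L → F)) (Q : Ω → β) (S : Ω → γ) (S' : Ω → δ)
    (h1 : mutI b p S W = 0)
    (h2 : condH b p Δ Q = 0)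
    (h3 : mutI b p Q (fun ω => (S ω, W ω)) = 0)
    (h4 : condH b p S' (fun ω => (S ω, Q ω)) = 0)
    (h5 : mutI b p Q (fun ω => fun i => W ω i + Δ ω i) = 0) :
    mutI b p S' (fun ω => fun i => W ω i + Δ ω i) = 0 := by
  have hΔ : DeterminedBy p Δ Q := determinedBy_of_condH_eq_zero hb hp.1 h2
  have hS' : DeterminedBy p S' (fun ω => (S ω, Q ω)) := determinedBy_of_condH_eq_zero hb hp.1 h4
  have hQT : entH b p (fun ω => (Q ω, fun i => W ω i + Δ ω i))
      = entH b p (fun ω => (Q ω, W ω)) := entH_prod_add_of_determinedBy hΔ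
  have hSQT : entH b p (fun ω => ((S ω, Q ω), fun i => W ω i + Δ ω i))
      = entH b p (fun ω => (Q ω, (S ω, W ω))) :=
    (entH_prod_add_of_determinedBy fun ω ω' hω hω' h => hΔ ω ω' hω hω' (congrArg Prod.snd h)).trans
      (entH_comp_of_injective (e := fun c : (γ × β) × (Fin L → F) => (c.1.2, (c.1.1, c.2)))
        (fun c c' h => by simp_all [Prod.ext_iff]) _).symm
  have hdata := mutI_le_mutI_of_determinedBy hb hp hS' (fun ω i => W ω i + Δ ω i)
  have hSQ := mutI_nonneg hb hp S Q
  have hQW := mutI_nonneg hb hp Q W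
  have hS'T := mutI_nonneg hb hp S' (fun ω i => W ω i + Δ ω i)
  simp only [mutI] at *
  linarith

/-- Induction step of steady-state secrecy (Lemma 4, Case 2): if `I(S; W) = 0`,
`H(Δ | Q) = 0`, `I(Q; S, W) = 0`, `H(S' | S, Q) = 0`, and `I(Q; W + Δ) = 0`,
then `I(S'; W + Δ) = 0`. -/
theorem steady_state_secrecy_induction_step
    {Ω F β γ δ : Type} [Fintype Ω] [Field F] [Fintype F] [DecidableEq F]
    [Fintype β] [Fintype γ] [Fintype δ]
    {L : ℕ} (b : ℝ) (hb : 1 < b) (p : Ω → ℝ) (hp : IsPMF p)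
    (W Δ : Ω → (Fin L → F)) (Q : Ω → β) (S : Ω → γ) (S' : Ω → δ)
    (h1 : mutI b p S W = 0)
    (h2 : condH b p Δ Q = 0)
    (h3 : mutI b p Q (fun ω => (S ω, W ω)) = 0)
    (h4 : condH b p S' (fun ω => (S ω, Q ω)) = 0)
    (h5 : mutI b p Q (fun ω => fun i => W ω i + Δ ω i) = 0) :
    mutI b p S' (fun ω => fun i => W ω i + Δ ω i) = 0 :=
  steady_state_secrecy_induction_step_general b hb p hp W Δ Q S S' h1 h2 h3 h4 h5
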